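/- arXiv:1706.05095 — 3 statements merged into one kernel-verified Lean document; each statement's English description precedes it below -/
import Mathlib

section
/- Let α, β > 0 and v₀, θ₀ ∈ ℝ with θ₀ ≠ 0. Let s₁ = −sgn(θ₀), let s₂ ∈ {−1,1} satisfy s₂·v₀ = −|v₀|, and set t₂ = |v₀|/β and t₁ = t₃ = (1/2)·√(v₀²/β² + 4|θ₀|/α) − |v₀|/(2β). Then t₁ ≥ 0, the C2a final state from initial state (v₀, θ₀, 0) with these durations and signs equals (0, 0, 0), and the total duration satisfies t₁ + t₂ + t₃ = √(v₀²/β² + 4|θ₀|/α). -/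
/-- The C2a final state: first phase angular acceleration `s₁ * α` for time `t₁`,
second phase linear acceleration `s₂ * β` for time `t₂`, third phase angular
acceleration `-s₁ * α` for time `t₃`.  The triple is `(v_f, θ_f, ω_f)`. -/
noncomputable def c2aFinal (α β v θ ω t₁ t₂ t₃ s₁ s₂ : ℝ) : ℝ × ℝ × ℝ :=
  (v + s₂ * β * t₂,
   θ + ω * t₁ + s₁ * α * t₁ ^ 2 / 2 + (ω + s₁ * α * t₁) * (t₂ + t₃) - s₁ * α * t₃ ^ 2 / 2,
   ω + s₁ * α * t₁ - s₁ * α * t₃)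

theorem stmt0 (α β v₀ θ₀ s₁ s₂ : ℝ) (hα : 0 < α) (hβ : 0 < β) (hθ₀ : θ₀ ≠ 0)
    (hs₁ : s₁ = -(if 0 < θ₀ then (1 : ℝ) else -1))
    (hs₂ : s₂ = -1 ∨ s₂ = 1) (hs₂v : s₂ * v₀ = -|v₀|)
    (t₁ t₂ t₃ : ℝ)
    (ht₂ : t₂ = |v₀| / β)
    (ht₁ : t₁ = (1 / 2) * Real.sqrt (v₀ ^ 2 / β ^ 2 + 4 * |θ₀| / α) - |v₀| / (2 * β))
    (ht₃ : t₃ = t₁) :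
    0 ≤ t₁ ∧
    c2aFinal α β v₀ θ₀ 0 t₁ t₂ t₃ s₁ s₂ = (0, 0, 0) ∧
    t₁ + t₂ + t₃ = Real.sqrt (v₀ ^ 2 / β ^ 2 + 4 * |θ₀| / α) := by
  have hE : 0 ≤ v₀ ^ 2 / β ^ 2 + 4 * |θ₀| / α := by positivity
  set S := Real.sqrt (v₀ ^ 2 / β ^ 2 + 4 * |θ₀| / α) with hS
  have hSsq : S ^ 2 = v₀ ^ 2 / β ^ 2 + 4 * |θ₀| / α := Real.sq_sqrt hE
  have h1 : (|v₀| / β) ^ 2 = v₀ ^ 2 / β ^ 2 := by rw [div_pow, sq_abs]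
  have haS : |v₀| / β ≤ S := by
    have h4 : 0 ≤ 4 * |θ₀| / α := by positivity
    calc |v₀| / β = Real.sqrt ((|v₀| / β) ^ 2) := by
            rw [Real.sqrt_sq (by positivity)]
      _ ≤ S := Real.sqrt_le_sqrt (by rw [h1]; linarith)
  have h2 : t₁ = S / 2 - (|v₀| / β) / 2 := by rw [ht₁]; ring
  have ht1 : 0 ≤ t₁ := by rw [h2]; linarith
  have hs1' : s₁ * |θ₀| = -θ₀ := by
    by_cases h : 0 < θ₀
    · rw [hs₁, if_pos h, abs_of_pos h]; ring
    · rw [hs₁, if_neg h, abs_of_neg (lt_of_le_of_ne (not_lt.mp h) hθ₀)]; ring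
  have hv : v₀ + s₂ * |v₀| = 0 := by
    rcases hs₂ with h | h <;> subst h <;> linarith [hs₂v]
  have hbt2 : β * t₂ = |v₀| := by rw [ht₂]; field_simp
  have hkey : α * (t₁ * (t₁ + t₂)) = |θ₀| := by
    have h3 : α * (t₁ * (t₁ + t₂)) = α * (S ^ 2 - (|v₀| / β) ^ 2) / 4 := by
      rw [h2, ht₂]; ring
    rw [h3, h1, hSsq]
    field_simp; ring
  refine ⟨ht1, ?_, ?_⟩
  · simp only [c2aFinal, Prod.mk.injEq]
    refine ⟨?_, ?_, by rw [ht₃]; ring⟩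
    · rw [show s₂ * β * t₂ = s₂ * (β * t₂) by ring, hbt2]; exact hv
    · rw [ht₃]
      have hθ : θ₀ + s₁ * (α * (t₁ * (t₁ + t₂))) = 0 := by
        rw [hkey]; linarith [hs1']
      linear_combination hθ
  · rw [ht₃, h2, ht₂]; ring
end

section
/- Let α, β > 0, (v, θ, ω) ∈ ℝ³, ω_d ∈ ℝ, and s₄, s₅, s₆ ∈ {−1,1} with s₆ω ≠ s₄ω_d. Define t₂ = (ω_d − ω)/(s₅α), t₁ = (ω_d·v/(s₆β) + (ω² − ω_d²)/(2s₅α) − θ)/(ω − (s₄/s₆)ω_d), and t₃ = (ω·v/(s₄β) + (ω² − ω_d²)/(2s₅α) − θ)/(ω_d − (s₆/s₄)ω). Then v + s₄βt₁ + s₆βt₃ = 0, ω + s₅αt₂ = ω_d, and θ + ωt₁ + ωt₂ + s₅αt₂²/2 + (ω + s₅αt₂)t₃ = 0; that is, the β-α-β control with these durations transfers (v, θ, ω) to the state (0, 0, ω_d). -/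
set_option maxHeartbeats 2000000

theorem stmt15 (α β v θ ω ωd : ℝ) (hα : 0 < α) (hβ : 0 < β)
    (s₄ s₅ s₆ : ℝ) (hs₄ : s₄ = -1 ∨ s₄ = 1) (hs₅ : s₅ = -1 ∨ s₅ = 1)
    (hs₆ : s₆ = -1 ∨ s₆ = 1) (hne : s₆ * ω ≠ s₄ * ωd)
    (t₁ t₂ t₃ : ℝ)
    (ht₂ : t₂ = (ωd - ω) / (s₅ * α))
    (ht₁ : t₁ = (ωd * v / (s₆ * β) + (ω ^ 2 - ωd ^ 2) / (2 * s₅ * α) - θ) / (ω - s₄ / s₆ * ωd))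
    (ht₃ : t₃ = (ω * v / (s₄ * β) + (ω ^ 2 - ωd ^ 2) / (2 * s₅ * α) - θ) / (ωd - s₆ / s₄ * ω)) :
    v + s₄ * β * t₁ + s₆ * β * t₃ = 0 ∧
    ω + s₅ * α * t₂ = ωd ∧
    θ + ω * t₁ + ω * t₂ + s₅ * α * t₂ ^ 2 / 2 + (ω + s₅ * α * t₂) * t₃ = 0 := by
  have hα' : α ≠ 0 := hα.ne'
  have hβ' : β ≠ 0 := hβ.ne'
  have hd : s₆ * ω - s₄ * ωd ≠ 0 := sub_ne_zero.mpr hne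
  subst ht₁ ht₂ ht₃
  rcases hs₄ with h4 | h4 <;> rcases hs₅ with h5 | h5 <;> rcases hs₆ with h6 | h6 <;>
    subst h4 h5 h6 <;>
    norm_num at hd ⊢ <;>
    first
      | (have h1 : ω - ωd ≠ 0 := fun h => hd (by linarith)
         have h2 : ωd - ω ≠ 0 := fun h => hd (by linarith))
      | (have h1 : ω + ωd ≠ 0 := fun h => hd (by linarith)
         have h2 : ωd + ω ≠ 0 := fun h => hd (by linarith))
  all_goals refine ⟨?_, ?_, ?_⟩ <;>
    (field_simp [h1, h2]; try ring_nf; try field_simp; try ring_nf; try linarith)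
end

section
/- Let T > 0, M > 0, C ∈ ℝ, and let u : ℝ → ℝ be measurable with |u(t)| ≤ M for almost every t ∈ [0, T] and ∫₀ᵀ u(τ) dτ = C. Set t* = (T + C/M)/2, so that t* ∈ [0, T], and let û(t) = M for t ∈ [0, t*] and û(t) = −M for t ∈ (t*, T]. Then ∫₀ᵀ (∫₀ᵗ u(τ) dτ) dt ≤ ∫₀ᵀ (∫₀ᵗ û(τ) dτ) dt. -/
/-!
Let `F t = ∫₀ᵗ u`. Integrating `u ≤ M` over `[0, t]` gives `F t ≤ M t`, and integrating `-M ≤ u`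
over `[t, T]` gives `F t = C - ∫ₜᵀ u ≤ C + M (T - t)`. The primitive of the bang-bang control is
exactly `min (M t) (C + M (T - t))`, so it dominates `F` pointwise on `[0, T]`; integrate.
-/
open MeasureTheory intervalIntegral Set
open scoped Interval

section BoundedControl

variable {u : ℝ → ℝ} {M c d a b : ℝ}

theorem abs_intervalIntegral_le_of_ae_abs_le
    (hbound : ∀ᵐ t ∂volume.restrict (Icc c d), |u t| ≤ M)
    (hca : c ≤ a) (hab : a ≤ b) (hbd : b ≤ d) :
    |∫ t in a..b, u t| ≤ M * (b - a) := by
  have hsub : Ι a b ⊆ Icc c d := by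
    rw [uIoc_of_le hab]
    exact Ioc_subset_Icc_self.trans (Icc_subset_Icc hca hbd)
  have h : ∀ᵐ t, t ∈ Ι a b → ‖u t‖ ≤ M := by
    filter_upwards [(ae_restrict_iff' measurableSet_Icc).mp hbound] with t ht hab'
    exact ht (hsub hab')
  simpa [abs_of_nonneg (sub_nonneg.mpr hab)] using norm_integral_le_of_norm_le_const_ae h

theorem intervalIntegrable_of_ae_abs_le (hu : Measurable u)
    (hbound : ∀ᵐ t ∂volume.restrict (Icc c d), |u t| ≤ M) (hcd : c ≤ d) :
    IntervalIntegrable u volume c d := by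
  refine (intervalIntegrable_iff_integrableOn_Icc_of_le hcd).mpr ?_
  exact Measure.integrableOn_of_bounded measure_Icc_lt_top.ne hu.aestronglyMeasurable
    (by simpa only [Real.norm_eq_abs] using hbound)

theorem intervalIntegral_le_min_of_ae_abs_le (hu : Measurable u)
    (hbound : ∀ᵐ t ∂volume.restrict (Icc c d), |u t| ≤ M) {t : ℝ} (hct : c ≤ t) (htd : t ≤ d) :
    ∫ τ in c..t, u τ ≤ min (M * (t - c)) ((∫ τ in c..d, u τ) + M * (d - t)) := by
  have hsplit : (∫ τ in c..t, u τ) + ∫ τ in t..d, u τ = ∫ τ in c..d, u τ :=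
    integral_add_adjacent_intervals
      (intervalIntegrable_of_ae_abs_le hu (ae_restrict_of_ae_restrict_of_subset
        (Icc_subset_Icc le_rfl htd) hbound) hct)
      (intervalIntegrable_of_ae_abs_le hu (ae_restrict_of_ae_restrict_of_subset
        (Icc_subset_Icc hct le_rfl) hbound) htd)
  have hleft := abs_le.mp (abs_intervalIntegral_le_of_ae_abs_le hbound le_rfl hct htd)
  have hright := abs_le.mp (abs_intervalIntegral_le_of_ae_abs_le hbound hct htd le_rfl)
  exact le_min hleft.2 (by linarith [hright.1])

end BoundedControl

noncomputable def bangBang (M s : ℝ) (t : ℝ) : ℝ := if t ≤ s then M else -M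

theorem antitone_bangBang {M : ℝ} (hM : 0 ≤ M) (s : ℝ) : Antitone (bangBang M s) := by
  intro a b hab
  unfold bangBang
  split_ifs <;> linarith

theorem integral_bangBang {M s t : ℝ} (hM : 0 ≤ M) (hs : 0 ≤ s) (ht : 0 ≤ t) :
    ∫ τ in (0 : ℝ)..t, bangBang M s τ = min (M * t) (M * (2 * s - t)) := by
  rcases le_or_gt t s with hts | hst
  · have hconst : ∫ τ in (0 : ℝ)..t, bangBang M s τ = ∫ _ in (0 : ℝ)..t, M :=
      integral_congr_ae <| ae_of_all _ fun τ hτ => by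
        rw [uIoc_of_le ht] at hτ
        exact if_pos (hτ.2.trans hts)
    rw [hconst, intervalIntegral.integral_const, smul_eq_mul, min_eq_left (by nlinarith)]
    ring
  · have hplus : ∫ τ in (0 : ℝ)..s, bangBang M s τ = ∫ _ in (0 : ℝ)..s, M :=
      integral_congr_ae <| ae_of_all _ fun τ hτ => by
        rw [uIoc_of_le hs] at hτ
        exact if_pos hτ.2
    have hminus : ∫ τ in s..t, bangBang M s τ = ∫ _ in s..t, -M :=
      integral_congr_ae <| ae_of_all _ fun τ hτ => by
        rw [uIoc_of_le hst.le] at hτ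
        exact if_neg (not_le.mpr hτ.1)
    rw [← integral_add_adjacent_intervals (antitone_bangBang hM s).intervalIntegrable
      (antitone_bangBang hM s).intervalIntegrable, hplus, hminus,
      intervalIntegral.integral_const, intervalIntegral.integral_const,
      min_eq_right (by nlinarith)]
    simp only [smul_eq_mul]
    ring

theorem stmt18 (T M C : ℝ) (hT : 0 < T) (hM : 0 < M)
    (u : ℝ → ℝ) (hu : Measurable u)
    (hbound : ∀ᵐ t ∂(volume.restrict (Set.Icc (0 : ℝ) T)), |u t| ≤ M)
    (hC : (∫ τ in (0 : ℝ)..T, u τ) = C)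
    (tstar : ℝ) (htstar : tstar = (T + C / M) / 2)
    (uhat : ℝ → ℝ) (huhat : uhat = fun t => if t ≤ tstar then M else -M) :
    tstar ∈ Set.Icc (0 : ℝ) T ∧
    (∫ t in (0 : ℝ)..T, (∫ τ in (0 : ℝ)..t, u τ)) ≤
      ∫ t in (0 : ℝ)..T, (∫ τ in (0 : ℝ)..t, uhat τ) := by
  have hswitch : M * (2 * tstar) = M * T + C := by
    rw [htstar]
    field_simp
  have hCbound := abs_le.mp (hC ▸ abs_intervalIntegral_le_of_ae_abs_le hbound le_rfl hT.le le_rfl)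
  have htstar_mem : tstar ∈ Icc 0 T := by
    constructor <;> nlinarith [hCbound.1, hCbound.2]
  refine ⟨htstar_mem, ?_⟩
  have hprimitive : ∀ t ∈ uIcc 0 T,
      ∫ τ in (0 : ℝ)..t, uhat τ = min (M * t) (M * (2 * tstar - t)) := fun t ht => by
    rw [uIcc_of_le hT.le] at ht
    exact huhat ▸ integral_bangBang hM.le htstar_mem.1 ht.1
  rw [integral_congr hprimitive]
  have hu_int : IntegrableOn u (uIcc 0 T) := by
    rw [uIcc_of_le hT.le, ← intervalIntegrable_iff_integrableOn_Icc_of_le hT.le]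
    exact intervalIntegrable_of_ae_abs_le hu hbound hT.le
  have hmin_cont : Continuous fun t => min (M * t) (M * (2 * tstar - t)) := by fun_prop
  refine integral_mono_on hT.le (continuousOn_primitive_interval hu_int).intervalIntegrable
    (hmin_cont.intervalIntegrable 0 T) fun t ht => ?_
  have hbranch : M * (2 * tstar - t) = C + M * (T - t) := by linarith
  rw [hbranch, ← hC]
  simpa only [sub_zero] using intervalIntegral_le_min_of_ae_abs_le hu hbound ht.1 ht.2
end
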